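/- arXiv:1811.06424 — 5 statements merged into one kernel-verified Lean document; each statement's English description precedes it below -/
import Mathlib

section
/- Let R₀ be a domain, H an abelian torsion-free group, and (S̄,ω̄) an (R₀,H)-crossed system. Then the crossed product R₀ ×_{(S̄,ω̄)} H is a domain. -/
/-- An `(R₀, H)`-crossed system: maps `S̄ : H → Aut(R₀)` and `ω̄ : H × H → R₀ˣ`
satisfying the normalization conditions, the twisted-homomorphism condition
`S̄(h)S̄(h') = C(ω̄(h,h'))S̄(hh')`, and the cocycle condition
`ω̄(h,h')ω̄(hh',h'') = S̄(h)(ω̄(h',h''))ω̄(h,h'h'')`. -/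
structure CrossedSystem (R₀ : Type*) (H : Type*) [Ring R₀] [Group H] where
  S : H → R₀ ≃+* R₀
  ω : H → H → R₀ˣ
  S_one : S 1 = RingEquiv.refl R₀
  ω_one_right : ∀ h, ω h 1 = 1
  ω_one_left : ∀ h, ω 1 h = 1
  S_comp : ∀ h h' r, S h (S h' r) = (ω h h' : R₀) * S (h * h') r * ((ω h h')⁻¹ : R₀ˣ)
  cocycle : ∀ h h' h'',
    (ω h h' : R₀) * (ω (h * h') h'' : R₀) = S h (ω h' h'' : R₀) * (ω h (h' * h'') : R₀)

/-- The multiplication of the crossed product `R₀ ×_{(S̄,ω̄)} H = ⊕_{h ∈ H} R₀ d_h`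
(realized as finitely supported functions `H →₀ R₀`), determined on homogeneous
elements by `(f d_h) • (f' d_{h'}) = f · S̄(h)(f') · ω̄(h,h') d_{hh'}`. -/
noncomputable def crossedMul {R₀ : Type*} {H : Type*} [Ring R₀] [Group H]
    (c : CrossedSystem R₀ H) (f g : H →₀ R₀) : H →₀ R₀ :=
  f.sum fun h r => g.sum fun h' r' => Finsupp.single (h * h') (r * c.S h r' * c.ω h h')

/-- The Mathlib (Dec 2024) definition, since removed: only `1` is of finite order. -/
def Monoid.IsTorsionFree (G : Type*) [Monoid G] : Prop :=
  ∀ g : G, g ≠ 1 → ¬IsOfFinOrder g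


/-!
A torsion-free abelian group embeds into its divisible hull, a `ℚ`-vector space, and vector spaces
over `ℚ` are orderable; hence for finite nonempty `A, B ⊆ H` some product `a₀ b₀` has a unique
factorization with `a₀ ∈ A`, `b₀ ∈ B`. For `f, g` with supports `A, B`, the coefficient of
`f • g` at `a₀ b₀` is then the single term `f(a₀) S̄(a₀)(g(b₀)) ω̄(a₀, b₀)`, which is nonzero
because `R₀` is a domain, `S̄(a₀)` is injective and `ω̄(a₀, b₀)` is a unit.
-/

theorem Monoid.IsTorsionFree.isMulTorsionFree {G : Type*} [CommGroup G]
    (h : Monoid.IsTorsionFree G) : IsMulTorsionFree G :=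
  IsMulTorsionFree.of_not_isOfFinOrder h

theorem UniqueSums.of_isAddTorsionFree (M : Type*) [AddCommGroup M] [IsAddTorsionFree M] :
    UniqueSums M :=
  .of_injective_addHom (DivisibleHull.coeAddMonoidHom M).toAddHom DivisibleHull.coe_injective
    inferInstance

theorem UniqueProds.of_isMulTorsionFree (G : Type*) [CommGroup G] [IsMulTorsionFree G] :
    UniqueProds G :=
  have := UniqueSums.of_isAddTorsionFree (Additive G)
  (MulEquiv.multiplicativeAdditive G).uniqueProds_iff.mp inferInstance

section CrossedProduct

variable {R₀ H : Type*} [Ring R₀] [Group H] (c : CrossedSystem R₀ H)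

theorem crossedMul_apply_of_uniqueMul {f g : H →₀ R₀} {a₀ b₀ : H}
    (hu : UniqueMul f.support g.support a₀ b₀) :
    crossedMul c f g (a₀ * b₀) = f a₀ * c.S a₀ (g b₀) * c.ω a₀ b₀ := by
  classical
  simp only [crossedMul, Finsupp.sum, Finsupp.finsetSum_apply, ← Finset.sum_product']
  refine (Finset.sum_eq_single (a₀, b₀) ?_ ?_).trans Finsupp.single_eq_same
  · rintro ⟨a, b⟩ hab hne
    obtain ⟨ha, hb⟩ := Finset.mem_product.mp hab
    exact Finsupp.single_eq_of_ne fun he ↦ hne (Prod.ext_iff.mpr (hu ha hb he.symm))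
  · intro hab
    rw [Finsupp.single_eq_same]
    rcases not_and_or.mp (Finset.mem_product.not.mp hab) with ha | hb
    · rw [Finsupp.notMem_support_iff.mp ha, zero_mul, zero_mul]
    · rw [Finsupp.notMem_support_iff.mp hb, map_zero, mul_zero, zero_mul]

theorem eq_zero_or_eq_zero_of_crossedMul_eq_zero [NoZeroDivisors R₀] [UniqueProds H]
    {f g : H →₀ R₀} (hfg : crossedMul c f g = 0) : f = 0 ∨ g = 0 := by
  by_contra! hne
  obtain ⟨a₀, ha₀, b₀, hb₀, hu⟩ := UniqueProds.uniqueMul_of_nonempty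
    (Finsupp.support_nonempty_iff.mpr hne.1) (Finsupp.support_nonempty_iff.mpr hne.2)
  have hcoeff := crossedMul_apply_of_uniqueMul c hu
  rw [hfg, Finsupp.zero_apply, eq_comm, Units.mul_left_eq_zero, mul_eq_zero,
    map_eq_zero_iff _ (c.S a₀).injective] at hcoeff
  exact hcoeff.elim (Finsupp.mem_support_iff.mp ha₀) (Finsupp.mem_support_iff.mp hb₀)

end CrossedProduct

/-- If `R₀` is a domain, `H` is an abelian torsion-free group and
`(S̄,ω̄)` is an `(R₀,H)`-crossed system, then the crossed product `R₀ ×_{(S̄,ω̄)} H`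
is a domain: it is nonzero and has no zero-divisors. -/
theorem statement11 {R₀ : Type*} {H : Type*} [Ring R₀] [IsDomain R₀] [CommGroup H]
    (htf : Monoid.IsTorsionFree H) (c : CrossedSystem R₀ H) :
    (Finsupp.single (1 : H) (1 : R₀) ≠ 0) ∧
    (∀ f g : H →₀ R₀, crossedMul c f g = 0 → f = 0 ∨ g = 0) := by
  have := htf.isMulTorsionFree
  have := UniqueProds.of_isMulTorsionFree H
  exact ⟨Finsupp.single_ne_zero.mpr one_ne_zero,
    fun _ _ ↦ eq_zero_or_eq_zero_of_crossedMul_eq_zero c⟩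
end

section
/- Let 1 → N → G → H → 1 be a group extension where ℂ[N] is a domain and H is abelian and torsion-free. Then ℂ[G] is a domain. In particular, the only idempotents of ℂ[G] are 0 and 1. -/
/-!
Sending `single g r` to `single (q g) (single g r)` embeds `R[G]` into `R[G][H]` as algebras,
making explicit the grading of `R[G]` by the cosets of `N`. A torsion-free abelian group has
unique products, so for nonzero `f` and `g` some `H`-degree of `f * g` is reached by exactly one
pair of degrees `(c, d)`, and there the component of `f * g` is `f_c * g_d`. Translated by group
elements, `f_c` and `g_d` become nonzero elements supported on `N`, whose product is nonzero
because `R[N]` is a domain.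
-/

open scoped MonoidAlgebra

-- A torsion-free group embeds into its divisible hull, a `ℚ`-vector space.
instance IsAddTorsionFree.to_twoUniqueSums {M : Type*} [AddCommGroup M] [IsAddTorsionFree M] :
    TwoUniqueSums M :=
  .of_injective_addHom (DivisibleHull.coeAddMonoidHom M).toAddHom DivisibleHull.coe_injective
    inferInstance

instance IsMulTorsionFree.to_twoUniqueProds {M : Type*} [CommGroup M] [IsMulTorsionFree M] :
    TwoUniqueProds M :=
  Multiplicative.instTwoUniqueProdsOfTwoUniqueSums (M := Additive M)

namespace MonoidAlgebra

section Coaction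

variable {R G H : Type*} [CommSemiring R] [Monoid G] [Monoid H]

noncomputable def gradingCoaction (q : G →* H) : R[G] →ₐ[R] R[G][H] :=
  lift R (R[G][H]) G
    { toFun g := single (q g) (of R G g)
      map_one' := by simp [one_def]
      map_mul' g g' := by simp [single_mul_single] }

theorem gradingCoaction_single (q : G →* H) (g : G) (r : R) :
    gradingCoaction q (single g r) = single (q g) (single g r) := by
  simp [gradingCoaction, lift_single]

theorem coeff_coeff_gradingCoaction_self (q : G →* H) (f : R[G]) (g : G) :
    ((gradingCoaction q f).coeff (q g)).coeff g = f.coeff g := by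
  classical
  induction f using MonoidAlgebra.induction_linear with
  | zero => simp
  | add f f' hf hf' => simp [hf, hf']
  | single a r =>
    simp only [gradingCoaction_single, coeff_single, Finsupp.single_apply]
    rcases eq_or_ne a g with rfl | hag <;> split_ifs <;> simp_all

theorem coeff_coeff_gradingCoaction_of_ne (q : G →* H) (f : R[G]) {g : G} {c : H}
    (h : q g ≠ c) : ((gradingCoaction q f).coeff c).coeff g = 0 := by
  classical
  induction f using MonoidAlgebra.induction_linear with
  | zero => simp
  | add f f' hf hf' => simp [hf, hf']
  | single a r =>
    simp only [gradingCoaction_single, coeff_single, Finsupp.single_apply]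
    split_ifs with hc
    · simp [show a ≠ g by rintro rfl; exact h hc]
    · simp

theorem gradingCoaction_ne_zero (q : G →* H) {f : R[G]} (hf : f ≠ 0) :
    gradingCoaction q f ≠ 0 := by
  obtain ⟨g, hg⟩ := Finsupp.support_nonempty_iff.mpr (coeff_eq_zero.not.mpr hf)
  intro h
  simp [← coeff_coeff_gradingCoaction_self q f g, h] at hg

theorem apply_eq_of_mem_support_coeff_gradingCoaction (q : G →* H) (f : R[G]) {c : H}
    {g : G} (hg : g ∈ ((gradingCoaction q f).coeff c).coeff.support) : q g = c := by
  by_contra h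
  exact Finsupp.mem_support_iff.mp hg (coeff_coeff_gradingCoaction_of_ne q f h)

theorem noZeroDivisors_of_homogeneous_mul_ne_zero [UniqueProds H] (q : G →* H)
    (h : ∀ {f g : R[G]} {c d : H}, f ≠ 0 → g ≠ 0 →
      (∀ x ∈ f.coeff.support, q x = c) → (∀ y ∈ g.coeff.support, q y = d) →
      f * g ≠ 0) :
    NoZeroDivisors R[G] := by
  refine ⟨fun {f g} hfg ↦ ?_⟩
  by_contra! ⟨hf, hg⟩
  obtain ⟨c, hc, d, hd, hcd⟩ := UniqueProds.uniqueMul_of_nonempty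
    (Finsupp.support_nonempty_iff.mpr (coeff_eq_zero.not.mpr (gradingCoaction_ne_zero q hf)))
    (Finsupp.support_nonempty_iff.mpr (coeff_eq_zero.not.mpr (gradingCoaction_ne_zero q hg)))
  have hcoeff := coeff_mul_mul_of_uniqueMul hcd
  rw [← map_mul, hfg, map_zero] at hcoeff
  exact h (Finsupp.mem_support_iff.mp hc) (Finsupp.mem_support_iff.mp hd)
    (fun _ ↦ apply_eq_of_mem_support_coeff_gradingCoaction q f)
    (fun _ ↦ apply_eq_of_mem_support_coeff_gradingCoaction q g) hcoeff.symm

end Coaction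

section Extension

variable {R N G H : Type*} [Semiring R] [Group N] [Group G] [Group H]

theorem mul_ne_zero_of_support_subset_range [NoZeroDivisors R[N]] {i : N →* G}
    (hi : Function.Injective i) {f g : R[G]} (hf : f ≠ 0) (hg : g ≠ 0)
    (hfi : ↑f.coeff.support ⊆ Set.range i) (hgi : ↑g.coeff.support ⊆ Set.range i) :
    f * g ≠ 0 := by
  obtain ⟨f, rfl⟩ : ∃ f' : R[N], mapDomain i f' = f := ⟨_, mapDomain_comapDomain hfi hi⟩
  obtain ⟨g, rfl⟩ : ∃ g' : R[N], mapDomain i g' = g := ⟨_, mapDomain_comapDomain hgi hi⟩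
  have hinj : Function.Injective (mapDomainRingHom R i) := mapDomain_injective hi
  rw [← mapDomain_mul]
  refine (map_ne_zero_iff _ hinj).mpr (mul_ne_zero ?_ ?_)
  · rintro rfl; simp at hf
  · rintro rfl; simp at hg

theorem support_single_inv_mul_subset_ker (q : G →* H) {f : R[G]} {x : G}
    (hf : ∀ z ∈ f.coeff.support, q z = q x) :
    ↑(single x⁻¹ 1 * f).coeff.support ⊆ (q.ker : Set G) := by
  intro z hz
  rw [Finset.mem_coe, Finsupp.mem_support_iff, coeff_single_mul_apply, inv_inv, one_mul] at hz
  simpa using hf _ (Finsupp.mem_support_iff.mpr hz)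

theorem support_mul_single_inv_subset_ker (q : G →* H) {f : R[G]} {x : G}
    (hf : ∀ z ∈ f.coeff.support, q z = q x) :
    ↑(f * single x⁻¹ 1).coeff.support ⊆ (q.ker : Set G) := by
  intro z hz
  rw [Finset.mem_coe, Finsupp.mem_support_iff, coeff_mul_single_apply, inv_inv, mul_one] at hz
  simpa using hf _ (Finsupp.mem_support_iff.mpr hz)

theorem isUnit_single_one (x : G) : IsUnit (single x (1 : R)) :=
  (Group.isUnit x).map (of R G)

theorem mul_ne_zero_of_extension [NoZeroDivisors R[N]] {i : N →* G} (q : G →* H)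
    (hi : Function.Injective i) (hexact : i.range = q.ker) {f g : R[G]} {c d : H}
    (hf : f ≠ 0) (hg : g ≠ 0) (hfc : ∀ x ∈ f.coeff.support, q x = c)
    (hgd : ∀ y ∈ g.coeff.support, q y = d) : f * g ≠ 0 := by
  obtain ⟨x, hx⟩ := Finsupp.support_nonempty_iff.mpr (coeff_eq_zero.not.mpr hf)
  obtain ⟨y, hy⟩ := Finsupp.support_nonempty_iff.mpr (coeff_eq_zero.not.mpr hg)
  have hker : (q.ker : Set G) = Set.range i := by rw [← hexact, MonoidHom.coe_range]
  have hf' : single x⁻¹ 1 * f ≠ 0 := mt (isUnit_single_one x⁻¹).mul_right_eq_zero.mp hf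
  have hg' : g * single y⁻¹ 1 ≠ 0 := mt (isUnit_single_one y⁻¹).mul_left_eq_zero.mp hg
  have key := mul_ne_zero_of_support_subset_range hi hf' hg'
    (hker ▸ support_single_inv_mul_subset_ker q (fun z hz ↦ (hfc z hz).trans (hfc x hx).symm))
    (hker ▸ support_mul_single_inv_subset_ker q (fun z hz ↦ (hgd z hz).trans (hgd y hy).symm))
  contrapose! key
  rw [mul_assoc, ← mul_assoc f, key, zero_mul, mul_zero]

end Extension

theorem noZeroDivisors_of_extension {R N G H : Type*} [CommSemiring R] [Group N] [Group G]
    [Group H] [UniqueProds H] [NoZeroDivisors R[N]] (i : N →* G) (q : G →* H)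
    (hi : Function.Injective i) (hexact : i.range = q.ker) : NoZeroDivisors R[G] :=
  noZeroDivisors_of_homogeneous_mul_ne_zero q (mul_ne_zero_of_extension q hi hexact)

end MonoidAlgebra

theorem statement13_general {N G H : Type*} [Group N] [Group G] [CommGroup H]
    (i : N →* G) (q : G →* H) (hi : Function.Injective i)
    (hexact : i.range = q.ker)
    (htf : ∀ g : H, g ≠ 1 → ¬IsOfFinOrder g)
    (hdom : IsDomain (MonoidAlgebra ℂ N)) :
    IsDomain (MonoidAlgebra ℂ G) ∧
    ∀ f : MonoidAlgebra ℂ G, f * f = f → f = 0 ∨ f = 1 := by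
  have : IsMulTorsionFree H := .of_not_isOfFinOrder htf
  have : IsDomain ℂ[N] := hdom
  have : NoZeroDivisors ℂ[G] := MonoidAlgebra.noZeroDivisors_of_extension i q hi hexact
  have : IsDomain ℂ[G] := NoZeroDivisors.to_isDomain _
  exact ⟨this, fun f hf ↦ IsIdempotentElem.iff_eq_zero_or_one.mp hf⟩

/-- Let `1 → N → G → H → 1` be a group extension where the complex group
ring `ℂ[N]` is a domain and `H` is abelian and torsion-free.  Then `ℂ[G]` is a domain;
in particular, the only idempotents of `ℂ[G]` are `0` and `1`. -/
theorem statement13 {N G H : Type*} [Group N] [Group G] [CommGroup H]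
    (i : N →* G) (q : G →* H) (hi : Function.Injective i)
    (hq : Function.Surjective q) (hexact : i.range = q.ker)
    (htf : ∀ g : H, g ≠ 1 → ¬IsOfFinOrder g)
    (hdom : IsDomain (MonoidAlgebra ℂ N)) :
    IsDomain (MonoidAlgebra ℂ G) ∧
    ∀ f : MonoidAlgebra ℂ G, f * f = f → f = 0 ∨ f = 1 :=
  statement13_general i q hi hexact htf hdom
end

section
/- The complex group algebra ℂ[H₃] of the discrete Heisenberg group H₃ is a domain, and consequently has no idempotents other than 0 and 1. -/
/-!
A group has unique products when any two nonempty finite subsets `A`, `B` contain `a₀`, `b₀`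
such that `a₀ * b₀` is written in only one way as a product from `A * B`; over a domain the group
algebra of such a group has no zero divisors, by comparing the coefficients at that product.
The property passes from `N` and `G` to any extension `N → E → G`: take a unique product
`x * y` of the images of `A` and `B` in `G`, then a unique product between the fibers of `A` over
`x` and of `B` over `y`, which are translates of finite subsets of `N`. Now `H₃ = ℤ² ⋊ ℤ`, and
`ℤ²`, `ℤ` are ordered groups, hence have unique products.
-/

/-- The automorphism `(m,n) ↦ (m, m+n)` of `ℤ²` (written multiplicatively). -/
def heisAut : MulAut (Multiplicative (ℤ × ℤ)) :=
  AddEquiv.toMultiplicative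
    { toFun := fun p => (p.1, p.1 + p.2)
      invFun := fun p => (p.1, p.2 - p.1)
      left_inv := fun p => by simp
      right_inv := fun p => by simp
      map_add' := fun p q => by
        simp [Prod.ext_iff]
        ring }

/-- The action `S : ℤ → Aut(ℤ²)`, `S(k)(m,n) = (m, km+n)`, i.e. `k ↦ heisAut^k`. -/
def heisAction : Multiplicative ℤ →* MulAut (Multiplicative (ℤ × ℤ)) :=
  zpowersHom _ heisAut

/-- The discrete Heisenberg group `H₃`, realized as the semidirect product
`ℤ² ⋊_S ℤ` with `S(k)(m,n) = (m, km+n)`. -/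
def Heisenberg : Type := SemidirectProduct (Multiplicative (ℤ × ℤ)) (Multiplicative ℤ) heisAction

instance : Group Heisenberg := SemidirectProduct.instGroup

namespace GroupExtension

variable {N E G : Type*} [Group N] [Group E] [Group G]

theorem exists_inl_eq_inv_mul (S : GroupExtension N E G) {a b : E}
    (h : S.rightHom a = S.rightHom b) : ∃ n, S.inl n = a⁻¹ * b := by
  rw [← MonoidHom.mem_range, S.range_inl_eq_ker_rightHom, MonoidHom.mem_ker, map_mul, map_inv,
    h, inv_mul_cancel]

theorem exists_inl_eq_mul_inv (S : GroupExtension N E G) {a b : E}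
    (h : S.rightHom a = S.rightHom b) : ∃ n, S.inl n = a * b⁻¹ := by
  rw [← MonoidHom.mem_range, S.range_inl_eq_ker_rightHom, MonoidHom.mem_ker, map_mul, map_inv,
    h, mul_inv_cancel]

theorem exists_uniqueMul_of_subset_fiber (S : GroupExtension N E G) [UniqueProds N]
    {A B : Finset E} {x y : G} (hA : A.Nonempty) (hB : B.Nonempty)
    (hAx : ∀ a ∈ A, S.rightHom a = x) (hBy : ∀ b ∈ B, S.rightHom b = y) :
    ∃ a₀ ∈ A, ∃ b₀ ∈ B, UniqueMul A B a₀ b₀ := by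
  obtain ⟨a₁, ha₁⟩ := hA
  obtain ⟨b₁, hb₁⟩ := hB
  -- `A` and `B` are the translates `a₁ * A'` and `B' * b₁` of finite subsets of `N`.
  let A' := A.preimage (a₁ * S.inl ·) ((mul_right_injective a₁).comp S.inl_injective).injOn
  let B' := B.preimage (S.inl · * b₁) ((mul_left_injective b₁).comp S.inl_injective).injOn
  obtain ⟨n₀, hn₀, m₀, hm₀, h₀⟩ := UniqueProds.uniqueMul_of_nonempty (A := A') (B := B')
    ⟨1, by simpa [A'] using ha₁⟩ ⟨1, by simpa [B'] using hb₁⟩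
  refine ⟨_, Finset.mem_preimage.mp hn₀, _, Finset.mem_preimage.mp hm₀, ?_⟩
  intro a b ha hb hab
  obtain ⟨n, hn⟩ := S.exists_inl_eq_inv_mul ((hAx a₁ ha₁).trans (hAx a ha).symm)
  obtain ⟨m, hm⟩ := S.exists_inl_eq_mul_inv ((hBy b hb).trans (hBy b₁ hb₁).symm)
  have ha : a = a₁ * S.inl n := by rw [hn, mul_inv_cancel_left]
  have hb : b = S.inl m * b₁ := by rw [hm, inv_mul_cancel_right]
  subst ha hb
  have hnm : n * m = n₀ * m₀ := S.inl_injective <| mul_left_cancel (a := a₁) <|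
    mul_right_cancel (b := b₁) <| by simpa only [map_mul, mul_assoc] using hab
  obtain ⟨rfl, rfl⟩ := h₀ (Finset.mem_preimage.mpr ha) (Finset.mem_preimage.mpr hb) hnm
  exact ⟨rfl, rfl⟩

theorem uniqueProds (S : GroupExtension N E G) [UniqueProds N] [UniqueProds G] :
    UniqueProds E where
  uniqueMul_of_nonempty {A B} hA hB := by
    classical
    obtain ⟨_, hx, _, hy, hxy⟩ :=
      UniqueProds.uniqueMul_of_nonempty (hA.image S.rightHom) (hB.image S.rightHom)
    obtain ⟨a₁, ha₁, rfl⟩ := Finset.mem_image.mp hx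
    obtain ⟨b₁, hb₁, rfl⟩ := Finset.mem_image.mp hy
    obtain ⟨a₀, ha₀, b₀, hb₀, h₀⟩ := S.exists_uniqueMul_of_subset_fiber
      (A := {a ∈ A | S.rightHom a = S.rightHom a₁}) (B := {b ∈ B | S.rightHom b = S.rightHom b₁})
      ⟨a₁, by simp [ha₁]⟩ ⟨b₁, by simp [hb₁]⟩ (fun a ha => (Finset.mem_filter.mp ha).2)
      (fun b hb => (Finset.mem_filter.mp hb).2)
    rw [Finset.mem_filter] at ha₀ hb₀
    exact ⟨a₀, ha₀.1, b₀, hb₀.1,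
      UniqueMul.of_image_filter (S.rightHom : E →ₙ* G) ha₀.2 hb₀.2 hxy h₀⟩

end GroupExtension

instance : UniqueProds Heisenberg := (SemidirectProduct.toGroupExtension heisAction).uniqueProds

/-- The complex group algebra `ℂ[H₃]` of the discrete Heisenberg group
`H₃` is a domain; consequently its only idempotents are `0` and `1`. -/
theorem statement14 :
    IsDomain (MonoidAlgebra ℂ Heisenberg) ∧
    ∀ f : MonoidAlgebra ℂ Heisenberg, f * f = f → f = 0 ∨ f = 1 := by
  have : IsDomain (MonoidAlgebra ℂ Heisenberg) := NoZeroDivisors.to_isDomain _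
  exact ⟨this, fun _ hf => IsIdempotentElem.iff_eq_zero_or_one.mp hf⟩
end

section
/- Let G be a group, N a normal subgroup, H = G/N with normalized section σ. On the crossed product ℂ[N] ×_{(S,ω)} H define the involution on homogeneous elements by (f d_h)* = ω̄(h⁻¹,h)⁻¹ ⋆ S̄(h⁻¹)(f*) d_{h⁻¹}, where f* is the usual involution on ℂ[N]. Then the isomorphism Φ : ℂ[G] → ℂ[N] ×_{(S,ω)} H satisfies Φ(x*) = Φ(x)* for all x ∈ ℂ[G], i.e., Φ is a *-isomorphism. -/
/-!
Every map in sight is additive, so both claims reduce to the monomials `δ_n d_h`. The map `Ψ`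
sends `δ_n d_h` to `δ_{n σ(h)}`, and `(h, n) ↦ n σ(h)` is a bijection `(G/N) × N ≃ G`; hence `Ψ`
is bijective. On a monomial the involution identity is the group identity
`(n σ(h))⁻¹ = ω(h⁻¹,h)⁻¹ · σ(h⁻¹) n⁻¹ σ(h⁻¹)⁻¹ · σ(h⁻¹)`, where
`ω(h⁻¹,h) = σ(h⁻¹) σ(h) σ(1)⁻¹ = σ(h⁻¹) σ(h)` because the section is normalized.
-/

section

variable {G : Type*} [Group G] (N : Subgroup G) [N.Normal]

/-- The natural involution `(Σ f_g δ_g)* = Σ conj(f_g) δ_{g⁻¹}` on a complex group ring. -/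
noncomputable def grStar {Γ : Type*} [Group Γ] (f : MonoidAlgebra ℂ Γ) :
    MonoidAlgebra ℂ Γ :=
  f.coeff.sum fun g a => MonoidAlgebra.single g⁻¹ (starRingEnd ℂ a)

/-- The action `S(h) : N → N`, `n ↦ σ(h) n σ(h)⁻¹`, of the factor system attached to a
section `σ` of the quotient map `G → G/N`. -/
def sectAct (σ : G ⧸ N → G) (h : G ⧸ N) (n : N) : N :=
  ⟨σ h * (n : G) * (σ h)⁻¹, (inferInstance : N.Normal).conj_mem (n : G) n.2 (σ h)⟩

/-- The factor set `ω(h,h') = σ(h)σ(h')σ(hh')⁻¹ ∈ N` attached to a section `σ` of the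
quotient map `G → G/N`. -/
def sectCocycle (σ : G ⧸ N → G) (hσ : ∀ h : G ⧸ N, (σ h : G ⧸ N) = h)
    (h h' : G ⧸ N) : N :=
  ⟨σ h * σ h' * (σ (h * h'))⁻¹, by
    rw [← QuotientGroup.eq_one_iff]
    rw [QuotientGroup.mk_mul, QuotientGroup.mk_mul, QuotientGroup.mk_inv, hσ, hσ, hσ]
    group⟩

/-- The induced automorphism `S̄(h)` of `ℂ[N]` (conjugation by `δ_{σ(h)}`). -/
noncomputable def sectActAlg (σ : G ⧸ N → G) (h : G ⧸ N)
    (f : MonoidAlgebra ℂ N) : MonoidAlgebra ℂ N :=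
  MonoidAlgebra.mapDomain (sectAct N σ h) f

/-- The involution of the crossed product `ℂ[N] ×_{(S,ω)} (G/N)`, given on homogeneous
elements by `(f d_h)* = ω̄(h⁻¹,h)⁻¹ ⋆ S̄(h⁻¹)(f*) d_{h⁻¹}`, where
`ω̄(h⁻¹,h)⁻¹ = δ_{ω(h⁻¹,h)⁻¹}` and `f*` is the usual involution on `ℂ[N]`. -/
noncomputable def sectCrossedStar (σ : G ⧸ N → G)
    (hσ : ∀ h : G ⧸ N, (σ h : G ⧸ N) = h)
    (F : (G ⧸ N) →₀ MonoidAlgebra ℂ N) : (G ⧸ N) →₀ MonoidAlgebra ℂ N :=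
  F.sum fun h f =>
    Finsupp.single h⁻¹
      (MonoidAlgebra.single ((sectCocycle N σ hσ h⁻¹ h)⁻¹) (1 : ℂ) *
        sectActAlg N σ h⁻¹ (grStar f))

/-- The map `Ψ : ℂ[N] ×_{(S,ω)} (G/N) → ℂ[G]`, `Σ_h f_h d_h ↦ Σ_h f_h ⋆ δ_{σ(h)}`
(the inverse of the isomorphism `Φ` of Theorem `thm:iso`). -/
noncomputable def sectPsi (σ : G ⧸ N → G)
    (F : (G ⧸ N) →₀ MonoidAlgebra ℂ N) : MonoidAlgebra ℂ G :=
  F.sum fun h f =>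
    MonoidAlgebra.mapDomainRingHom ℂ N.subtype f * MonoidAlgebra.single (σ h) (1 : ℂ)

end

theorem MonoidAlgebra.finsupp_induction_single_single {H K R : Type*} [Semiring R]
    {motive : (H →₀ MonoidAlgebra R K) → Prop} (zero : motive 0)
    (add : ∀ F F', motive F → motive F' → motive (F + F'))
    (single_single : ∀ h k r, motive (Finsupp.single h (MonoidAlgebra.single k r)))
    (F : H →₀ MonoidAlgebra R K) : motive F := by
  induction F using Finsupp.induction_linear with
  | zero => exact zero
  | add F F' hF hF' => exact add F F' hF hF'
  | single h f =>
    induction f using MonoidAlgebra.induction_linear with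
    | zero => simpa using zero
    | add f f' hf hf' => simpa [Finsupp.single_add] using add _ _ hf hf'
    | single k r => exact single_single h k r

lemma grStar_zero {Γ : Type*} [Group Γ] : grStar (0 : MonoidAlgebra ℂ Γ) = 0 := by
  simp [grStar]

lemma grStar_add {Γ : Type*} [Group Γ] (f f' : MonoidAlgebra ℂ Γ) :
    grStar (f + f') = grStar f + grStar f' := by
  classical
  rw [grStar, MonoidAlgebra.coeff_add]
  exact Finsupp.sum_add_index (fun _ _ => by simp)
    (fun _ _ _ _ => by simp [MonoidAlgebra.single_add])

lemma grStar_single {Γ : Type*} [Group Γ] (g : Γ) (a : ℂ) :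
    grStar (MonoidAlgebra.single g a) = MonoidAlgebra.single g⁻¹ (starRingEnd ℂ a) := by
  rw [grStar, MonoidAlgebra.coeff_single]
  exact Finsupp.sum_single_index (by simp)

section

variable {G : Type*} [Group G] (N : Subgroup G) (σ : G ⧸ N → G)

lemma sectPsi_zero : sectPsi N σ 0 = 0 :=
  Finsupp.sum_zero_index

lemma sectPsi_add (F F' : (G ⧸ N) →₀ MonoidAlgebra ℂ N) :
    sectPsi N σ (F + F') = sectPsi N σ F + sectPsi N σ F' := by
  classical
  exact Finsupp.sum_add_index (fun _ _ => by simp) (fun _ _ _ _ => by rw [map_add, add_mul])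

lemma sectPsi_single_single (h : G ⧸ N) (n : N) (a : ℂ) :
    sectPsi N σ (Finsupp.single h (MonoidAlgebra.single n a)) =
      MonoidAlgebra.single ((n : G) * σ h) a := by
  rw [sectPsi, Finsupp.sum_single_index (by simp)]
  simp [MonoidAlgebra.mapDomainRingHom, MonoidAlgebra.single_mul_single]

end

section

variable {G : Type*} [Group G] (N : Subgroup G) [N.Normal]

section

variable (σ : G ⧸ N → G)

lemma sectCrossedStar_zero (hσ : ∀ h : G ⧸ N, (σ h : G ⧸ N) = h) :
    sectCrossedStar N σ hσ 0 = 0 :=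
  Finsupp.sum_zero_index

lemma sectCrossedStar_add (hσ : ∀ h : G ⧸ N, (σ h : G ⧸ N) = h)
    (F F' : (G ⧸ N) →₀ MonoidAlgebra ℂ N) :
    sectCrossedStar N σ hσ (F + F') =
      sectCrossedStar N σ hσ F + sectCrossedStar N σ hσ F' := by
  classical
  exact Finsupp.sum_add_index (fun _ _ => by simp [grStar_zero, sectActAlg])
    (fun _ _ _ _ => by
      simp only [grStar_add, sectActAlg, MonoidAlgebra.mapDomain_add, mul_add,
        Finsupp.single_add])

lemma sectCrossedStar_single_single (hσ : ∀ h : G ⧸ N, (σ h : G ⧸ N) = h) (h : G ⧸ N) (n : N) (a : ℂ) :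
    sectCrossedStar N σ hσ (Finsupp.single h (MonoidAlgebra.single n a)) =
      Finsupp.single h⁻¹
        (MonoidAlgebra.single ((sectCocycle N σ hσ h⁻¹ h)⁻¹ * sectAct N σ h⁻¹ n⁻¹)
          (starRingEnd ℂ a)) := by
  rw [sectCrossedStar, Finsupp.sum_single_index (by simp [grStar_zero, sectActAlg]),
    grStar_single, sectActAlg, MonoidAlgebra.mapDomain_single,
    MonoidAlgebra.single_mul_single, one_mul]

lemma coe_sectCocycle_inv_self (hσ : ∀ h : G ⧸ N, (σ h : G ⧸ N) = h)
    (hσ1 : σ 1 = 1) (h : G ⧸ N) :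
    (sectCocycle N σ hσ h⁻¹ h : G) = σ h⁻¹ * σ h := by
  simp [sectCocycle, hσ1]

theorem grStar_sectPsi (hσ : ∀ h : G ⧸ N, (σ h : G ⧸ N) = h)
    (hσ1 : σ 1 = 1) (F : (G ⧸ N) →₀ MonoidAlgebra ℂ N) :
    grStar (sectPsi N σ F) = sectPsi N σ (sectCrossedStar N σ hσ F) := by
  induction F using MonoidAlgebra.finsupp_induction_single_single with
  | zero => rw [sectPsi_zero, sectCrossedStar_zero, sectPsi_zero, grStar_zero]
  | add F F' hF hF' =>
    rw [sectPsi_add, grStar_add, sectCrossedStar_add, sectPsi_add, hF, hF']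
  | single_single h n a =>
    rw [sectPsi_single_single, grStar_single, sectCrossedStar_single_single,
      sectPsi_single_single]
    congr 1
    push_cast [coe_sectCocycle_inv_self N σ hσ hσ1, sectAct]
    group

lemma mul_inv_sect_mem (hσ : ∀ h : G ⧸ N, (σ h : G ⧸ N) = h) (g : G) :
    g * (σ g)⁻¹ ∈ N := by
  rw [← div_eq_mul_inv, ← QuotientGroup.eq_iff_div_mem, hσ]

lemma mk_mul_sect (hσ : ∀ h : G ⧸ N, (σ h : G ⧸ N) = h) (n : N)
    (h : G ⧸ N) : (((n : G) * σ h : G) : G ⧸ N) = h := by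
  rw [QuotientGroup.mk_mul, (QuotientGroup.eq_one_iff _).2 n.2, one_mul, hσ]

def sectProdEquiv (hσ : ∀ h : G ⧸ N, (σ h : G ⧸ N) = h) :
    (G ⧸ N) × N ≃ G where
  toFun p := p.2 * σ p.1
  invFun g := (g, ⟨g * (σ g)⁻¹, mul_inv_sect_mem N σ hσ g⟩)
  left_inv := fun ⟨h, n⟩ => by
    ext <;> simp [mk_mul_sect N σ hσ]
  right_inv g := by simp

noncomputable def sectPsiAddEquiv (hσ : ∀ h : G ⧸ N, (σ h : G ⧸ N) = h) :
    ((G ⧸ N) →₀ MonoidAlgebra ℂ N) ≃+ MonoidAlgebra ℂ G :=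
  (MonoidAlgebra.coeffAddEquiv.symm.trans MonoidAlgebra.curryAddEquiv.symm).trans
    (MonoidAlgebra.mapDomainAddEquiv ℂ (sectProdEquiv N σ hσ))

lemma coe_sectPsiAddEquiv (hσ : ∀ h : G ⧸ N, (σ h : G ⧸ N) = h) :
    ⇑(sectPsiAddEquiv N σ hσ) = sectPsi N σ := by
  funext F
  induction F using MonoidAlgebra.finsupp_induction_single_single with
  | zero => rw [map_zero, sectPsi_zero]
  | add F F' hF hF' => rw [map_add, sectPsi_add, hF, hF']
  | single_single h n a =>
    rw [sectPsi_single_single]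
    simp [sectPsiAddEquiv, sectProdEquiv]

theorem sectPsi_bijective (hσ : ∀ h : G ⧸ N, (σ h : G ⧸ N) = h) :
    Function.Bijective (sectPsi N σ) :=
  coe_sectPsiAddEquiv N σ hσ ▸ (sectPsiAddEquiv N σ hσ).bijective

end

/-- For `N ⊴ G`, `H = G/N` with normalized section `σ`, the crossed
product `ℂ[N] ×_{(S,ω)} H` endowed with the involution
`(f d_h)* = ω̄(h⁻¹,h)⁻¹ ⋆ S̄(h⁻¹)(f*) d_{h⁻¹}` is `*`-isomorphic to `ℂ[G]` with its
natural involution, via the isomorphism `Φ` of Theorem `thm:iso`: equivalently, the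
inverse map `Ψ` is bijective and intertwines the involutions,
`Ψ(F)* = Ψ(F*)` for all `F`. -/
theorem statement16 (σ : G ⧸ N → G) (hσ : ∀ h : G ⧸ N, (σ h : G ⧸ N) = h)
    (hσ1 : σ 1 = 1) :
    Function.Bijective (sectPsi N σ) ∧
    ∀ F : (G ⧸ N) →₀ MonoidAlgebra ℂ N,
      grStar (sectPsi N σ F) = sectPsi N σ (sectCrossedStar N σ hσ F) :=
  ⟨sectPsi_bijective N σ hσ, grStar_sectPsi N σ hσ hσ1⟩

end
end

section
/- Let Z be a torsion-free discrete abelian group. Then the Pontryagin dual group Ẑ = Hom(Z, 𝕋), equipped with the topology of pointwise convergence, is a connected compact Hausdorff topological space. -/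
/-!
The circle is divisible, hence an injective `ℤ`-module by Baer's criterion, and `z ↦ z ^ n` is
injective on a torsion-free group, so every character of `Z` has an `n`-th root: the dual is
divisible. A divisible compact Hausdorff group is connected, because every clopen neighbourhood
of `1` contains an open subgroup of some finite index `m`, which contains all `m`-th powers, i.e.
everything, and the component of `1` is the intersection of its clopen neighbourhoods.
-/

theorem Circle.pow_surjective {n : ℕ} (hn : n ≠ 0) : Function.Surjective fun z : Circle ↦ z ^ n :=
  fun z ↦ ⟨Circle.exp (Complex.arg z / n), by
    change _ ^ n = z
    rw [← Circle.exp_nsmul, nsmul_eq_mul, mul_div_cancel₀ _ (Nat.cast_ne_zero.mpr hn),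
      Circle.exp_arg]⟩

theorem Circle.baer_additive : Module.Baer ℤ (Additive Circle) :=
  letI : DivisibleBy (Additive Circle) ℕ :=
    divisibleByOfSMulRightSurj _ _ fun hn ↦ Circle.pow_surjective hn
  letI := AddGroup.divisibleByIntOfDivisibleByNat (Additive Circle)
  Module.Baer.of_divisible _

theorem MonoidHom.exists_pow_eq_of_baer {Z A : Type*} [CommGroup Z] [IsMulTorsionFree Z]
    [CommGroup A] (hA : Module.Baer ℤ (Additive A)) (χ : Z →* A) {n : ℕ} (hn : n ≠ 0) :
    ∃ ψ : Z →* A, ψ ^ n = χ := by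
  obtain ⟨ψ, hψ⟩ := hA.extension_property_addMonoidHom (nsmulAddMonoidHom (α := Additive Z) n)
    (nsmul_right_injective hn) χ.toAdditive
  refine ⟨MonoidHom.toAdditive.symm ψ, MonoidHom.ext fun z ↦ ?_⟩
  have hz := DFunLike.congr_fun hψ (Additive.ofMul z)
  rw [AddMonoidHom.comp_apply, nsmulAddMonoidHom_apply, map_nsmul] at hz
  exact congrArg Additive.toMul hz

theorem PontryaginDual.pow_surjective {Z : Type*} [CommGroup Z] [TopologicalSpace Z]
    [DiscreteTopology Z] [IsMulTorsionFree Z] {n : ℕ} (hn : n ≠ 0) :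
    Function.Surjective fun χ : PontryaginDual Z ↦ χ ^ n := fun χ ↦ by
  obtain ⟨ψ, hψ⟩ := χ.toMonoidHom.exists_pow_eq_of_baer Circle.baer_additive hn
  exact ⟨⟨ψ, continuous_of_discreteTopology⟩, PontryaginDual.ext fun z ↦
    (ContinuousMonoidHom.pow_apply _ n z).trans (DFunLike.congr_fun hψ z)⟩

theorem connectedSpace_of_pow_surjective {G : Type*} [Group G] [TopologicalSpace G]
    [IsTopologicalGroup G] [CompactSpace G] [T2Space G]
    (h : ∀ n : ℕ, n ≠ 0 → Function.Surjective fun g : G ↦ g ^ n) : ConnectedSpace G := by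
  suffices connectedComponent (1 : G) = Set.univ from
    connectedSpace_iff_connectedComponent.mpr ⟨1, this⟩
  refine Set.eq_univ_of_forall fun g ↦ ?_
  rw [connectedComponent_eq_iInter_isClopen]
  refine Set.mem_iInter.mpr fun ⟨W, hW, h1W⟩ ↦ ?_
  obtain ⟨H, hHW⟩ := IsTopologicalGroup.exist_openNormalSubgroup_sub_clopen_nhds_of_one hW h1W
  have : H.toSubgroup.FiniteIndex := H.toOpenSubgroup.finiteIndex_of_finite_quotient
  obtain ⟨r, rfl⟩ := h H.toSubgroup.index Subgroup.FiniteIndex.index_ne_zero g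
  exact hHW (Subgroup.pow_index_mem H.toSubgroup r)

/-- Let `Z` be a torsion-free discrete abelian group.  Then the
Pontryagin dual `Ẑ = Hom(Z, 𝕋)` (continuous characters into the circle group, which for
discrete `Z` are all characters, with the topology of pointwise convergence) is a
connected compact Hausdorff topological space. -/
theorem statement18 {Z : Type*} [CommGroup Z] [TopologicalSpace Z] [DiscreteTopology Z]
    (htf : ∀ g : Z, g ≠ 1 → ¬IsOfFinOrder g) :
    CompactSpace (PontryaginDual Z) ∧ T2Space (PontryaginDual Z) ∧
      ConnectedSpace (PontryaginDual Z) := by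
  have : IsMulTorsionFree Z := isMulTorsionFree_iff_not_isOfFinOrder.mpr htf
  exact ⟨inferInstance, inferInstance,
    connectedSpace_of_pow_surjective fun _ ↦ PontryaginDual.pow_surjective⟩
end
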